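/- arXiv:1102.4820 — 2 statements merged into one kernel-verified Lean document; each statement's English description precedes it below -/
import Mathlib

section
/- (Harris–FKG inequality for product Bernoulli measures on a finite set) Let S be a finite set, P the product measure on {0,1}^S with P(ω(s)=1) = p for each s independently, and A, B increasing events. Then P(A ∩ B) ≥ P(A)·P(B). -/
def IncreasingEvent {S : Type*} (A : Set (S → Bool)) : Prop :=
  ∀ ω₁ ω₂ : S → Bool, (∀ s, ω₁ s ≤ ω₂ s) → ω₁ ∈ A → ω₂ ∈ A

/-- The Bernoulli(p) product weight of a configuration. -/
def bernoulliWeight {S : Type*} [Fintype S] (p : ℝ) (ω : S → Bool) : ℝ :=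
  ∏ s : S, if ω s then p else 1 - p

open Classical in
/-- The probability of an event under the Bernoulli(p) product measure on `{0,1}^S`. -/
noncomputable def bernoulliProb {S : Type*} [Fintype S] [DecidableEq S]
    (p : ℝ) (A : Set (S → Bool)) : ℝ :=
  ∑ ω : S → Bool, if ω ∈ A then bernoulliWeight p ω else 0

/-! The FKG inequality on a finite distributive lattice (`fkg`) applies to the lattice `S → Bool`
with weight `bernoulliWeight p`: this weight is log-supermodular, even with equality, because
coordinatewise `{a s ∧ b s, a s ∨ b s} = {a s, b s}` as multisets; and increasing events have
monotone indicators. -/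

open Finset

theorem IncreasingEvent.monotone_indicator_one {S : Type*} {A : Set (S → Bool)}
    (hA : IncreasingEvent A) : Monotone (A.indicator (1 : (S → Bool) → ℝ)) := by
  intro a b hab
  by_cases ha : a ∈ A
  · simp [ha, hA a b hab ha]
  · simp only [Set.indicator_of_notMem ha]
    exact Set.indicator_nonneg (fun _ _ ↦ zero_le_one) b

namespace bernoulliWeight

variable {S : Type*} [Fintype S]

theorem nonneg {p : ℝ} (hp0 : 0 ≤ p) (hp1 : p ≤ 1) (ω : S → Bool) : 0 ≤ bernoulliWeight p ω :=
  prod_nonneg fun s _ ↦ by split <;> linarith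

theorem inf_mul_sup (p : ℝ) (a b : S → Bool) :
    bernoulliWeight p (a ⊓ b) * bernoulliWeight p (a ⊔ b) =
      bernoulliWeight p a * bernoulliWeight p b := by
  simp only [bernoulliWeight, ← prod_mul_distrib, Pi.inf_apply, Pi.sup_apply]
  have factor : ∀ x y : Bool, ((if min x y then p else 1 - p) * if max x y then p else 1 - p) =
      (if x then p else 1 - p) * if y then p else 1 - p := by
    intro x y
    cases x <;> cases y <;> simp [mul_comm]
  exact prod_congr rfl fun s _ ↦ factor (a s) (b s)

theorem sum_eq_one [DecidableEq S] (p : ℝ) : ∑ ω : S → Bool, bernoulliWeight p ω = 1 := by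
  simp only [bernoulliWeight]
  rw [← Fintype.prod_sum (fun (_ : S) (b : Bool) ↦ if b then p else 1 - p)]
  simp

end bernoulliWeight

theorem bernoulliProb_eq_sum_mul_indicator {S : Type*} [Fintype S] [DecidableEq S]
    (p : ℝ) (A : Set (S → Bool)) :
    bernoulliProb p A = ∑ ω, bernoulliWeight p ω * A.indicator 1 ω := by
  refine sum_congr rfl fun ω _ ↦ ?_
  by_cases hω : ω ∈ A <;> simp [hω]

theorem harris_fkg {S : Type*} [Fintype S] [DecidableEq S]
    (p : ℝ) (hp0 : 0 ≤ p) (hp1 : p ≤ 1) (A B : Set (S → Bool))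
    (hA : IncreasingEvent A) (hB : IncreasingEvent B) :
    bernoulliProb p (A ∩ B) ≥ bernoulliProb p A * bernoulliProb p B := by
  have key := fkg _ _ (bernoulliWeight p) (bernoulliWeight.nonneg hp0 hp1)
    (Set.indicator_nonneg fun _ _ ↦ zero_le_one) (Set.indicator_nonneg fun _ _ ↦ zero_le_one)
    hA.monotone_indicator_one hB.monotone_indicator_one
    (fun a b ↦ (bernoulliWeight.inf_mul_sup p a b).ge)
  rw [bernoulliWeight.sum_eq_one, one_mul] at key
  rw [ge_iff_le, bernoulliProb_eq_sum_mul_indicator, bernoulliProb_eq_sum_mul_indicator,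
    bernoulliProb_eq_sum_mul_indicator, Set.inter_indicator_one]
  exact key
end

section
/- (Russo's formula) Let S be a finite set, P_p the product Bernoulli(p) measure on Ω = {0,1}^S, and A ⊆ Ω an increasing event. A site s is pivotal for A in configuration ω if flipping the value ω(s) changes membership of ω in A. Then d/dp P_p(A) = Σ_{s∈S} P_p(s is pivotal for A) = E_p[N_A], where N_A is the number of pivotal sites. -/
/-- The event that site `s` is pivotal for `A`: flipping `ω s` changes membership in `A`. -/
def pivotal {S : Type*} [DecidableEq S] (A : Set (S → Bool)) (s : S) : Set (S → Bool) :=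
  {ω | ¬ ((ω ∈ A) ↔ (Function.update ω s (!ω s) ∈ A))}

/-!
Differentiating the product `∏ₛ (if ω s then p else 1 - p)` site by site, the derivative of
`P_p(A)` is `∑ₛ ∑_{ω ∈ A} ±(weight of ω off s)`, with sign `+` when `ω s = true`. Pair each `ω`
with the configuration `ω'` obtained by flipping `s`: both carry the same off-`s` weight, which is
also `P_p(ω) + P_p(ω')`. Since `A` is increasing, the signed contributions of the pair sum to `1`
exactly when `s` is pivotal and to `0` otherwise, so the sum over `ω` for fixed `s` is
`P_p(s is pivotal)`.
-/

open Classical Finset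

section Russo

variable {S : Type*} [DecidableEq S]

def flipAt (s : S) (ω : S → Bool) : S → Bool := Function.update ω s (!ω s)

@[simp]
lemma flipAt_apply_self (s : S) (ω : S → Bool) : flipAt s ω s = !ω s := by
  simp [flipAt]

lemma flipAt_apply_of_ne {s t : S} (ω : S → Bool) (h : t ≠ s) : flipAt s ω t = ω t :=
  Function.update_of_ne h _ _

lemma flipAt_involutive (s : S) : Function.Involutive (flipAt s) := by
  intro ω
  funext t
  by_cases h : t = s
  · subst h; simp
  · simp only [flipAt_apply_of_ne _ h]

lemma flipAt_le_of_apply_eq_true {s : S} {ω : S → Bool} (hs : ω s = true) (t : S) :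
    flipAt s ω t ≤ ω t := by
  by_cases h : t = s
  · subst h; simp [hs]
  · rw [flipAt_apply_of_ne _ h]

lemma mem_pivotal_iff {A : Set (S → Bool)} {s : S} {ω : S → Bool} :
    ω ∈ pivotal A s ↔ ¬(ω ∈ A ↔ flipAt s ω ∈ A) := Iff.rfl

lemma flipAt_mem_pivotal_iff {A : Set (S → Bool)} {s : S} {ω : S → Bool} :
    flipAt s ω ∈ pivotal A s ↔ ω ∈ pivotal A s := by
  rw [mem_pivotal_iff, mem_pivotal_iff, flipAt_involutive s ω]
  tauto

/-- `d/dp (if b then p else 1 - p)`. -/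
def spin (b : Bool) : ℝ := if b then 1 else -1

noncomputable def signedIndicator (A : Set (S → Bool)) (s : S) (ω : S → Bool) : ℝ :=
  if ω ∈ A then spin (ω s) else 0

lemma signedIndicator_add_flipAt_of_apply_eq_true {A : Set (S → Bool)} (hA : IncreasingEvent A)
    {s : S} {ω : S → Bool} (hs : ω s = true) :
    signedIndicator A s ω + signedIndicator A s (flipAt s ω) =
      if ω ∈ pivotal A s then 1 else 0 := by
  have hmono : flipAt s ω ∈ A → ω ∈ A := hA _ _ (flipAt_le_of_apply_eq_true hs)
  by_cases h₁ : ω ∈ A <;> by_cases h₂ : flipAt s ω ∈ A <;>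
    simp_all [signedIndicator, spin, mem_pivotal_iff]

lemma signedIndicator_add_flipAt {A : Set (S → Bool)} (hA : IncreasingEvent A)
    (s : S) (ω : S → Bool) :
    signedIndicator A s ω + signedIndicator A s (flipAt s ω) =
      if ω ∈ pivotal A s then 1 else 0 := by
  cases hs : ω s
  · have hs' : flipAt s ω s = true := by simp [hs]
    rw [add_comm, ← flipAt_mem_pivotal_iff, ← signedIndicator_add_flipAt_of_apply_eq_true hA hs',
      flipAt_involutive s ω]
  · exact signedIndicator_add_flipAt_of_apply_eq_true hA hs

variable [Fintype S]

lemma sum_comp_flipAt {M : Type*} [AddCommMonoid M] (s : S) (f : (S → Bool) → M) :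
    ∑ ω, f (flipAt s ω) = ∑ ω, f ω :=
  Fintype.sum_bijective _ (flipAt_involutive s).bijective _ _ fun _ => rfl

lemma sum_eq_sum_of_add_flipAt (s : S) {F G : (S → Bool) → ℝ}
    (h : ∀ ω, F ω + F (flipAt s ω) = G ω + G (flipAt s ω)) : ∑ ω, F ω = ∑ ω, G ω := by
  have hsum := Finset.sum_congr rfl fun ω (_ : ω ∈ univ) => h ω
  rw [sum_add_distrib, sum_add_distrib, sum_comp_flipAt, sum_comp_flipAt] at hsum
  linarith

def bernoulliWeightOff (p : ℝ) (s : S) (ω : S → Bool) : ℝ :=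
  ∏ t ∈ univ.erase s, if ω t then p else 1 - p

lemma bernoulliWeight_eq_mul_bernoulliWeightOff (p : ℝ) (s : S) (ω : S → Bool) :
    bernoulliWeight p ω = (if ω s then p else 1 - p) * bernoulliWeightOff p s ω :=
  (mul_prod_erase univ _ (mem_univ s)).symm

lemma bernoulliWeightOff_flipAt (p : ℝ) (s : S) (ω : S → Bool) :
    bernoulliWeightOff p s (flipAt s ω) = bernoulliWeightOff p s ω :=
  prod_congr rfl fun _ ht => by rw [flipAt_apply_of_ne _ (mem_erase.1 ht).1]

lemma bernoulliWeight_add_flipAt (p : ℝ) (s : S) (ω : S → Bool) :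
    bernoulliWeight p ω + bernoulliWeight p (flipAt s ω) = bernoulliWeightOff p s ω := by
  rw [bernoulliWeight_eq_mul_bernoulliWeightOff p s, bernoulliWeight_eq_mul_bernoulliWeightOff p s,
    bernoulliWeightOff_flipAt, flipAt_apply_self]
  cases ω s <;>
    simp only [Bool.not_false, Bool.not_true, Bool.false_eq_true, if_true, if_false] <;> ring

lemma hasDerivAt_bernoulliWeight (ω : S → Bool) (p : ℝ) :
    HasDerivAt (fun q => bernoulliWeight q ω)
      (∑ s, spin (ω s) * bernoulliWeightOff p s ω) p := by
  have hfactor : ∀ s ∈ (univ : Finset S),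
      HasDerivAt (fun q : ℝ => if ω s then q else 1 - q) (spin (ω s)) p := by
    intro s _
    cases ω s
    · simpa [spin] using (hasDerivAt_id p).const_sub 1
    · simpa [spin] using hasDerivAt_id' p
  simpa only [bernoulliWeight, bernoulliWeightOff, smul_eq_mul, mul_comm]
    using HasDerivAt.fun_finsetProd hfactor

lemma hasDerivAt_bernoulliProb (A : Set (S → Bool)) (p : ℝ) :
    HasDerivAt (fun q => bernoulliProb q A)
      (∑ s, ∑ ω, signedIndicator A s ω * bernoulliWeightOff p s ω) p := by
  rw [sum_comm]
  refine HasDerivAt.fun_sum fun ω _ => ?_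
  by_cases hω : ω ∈ A
  · simpa only [hω, if_true, signedIndicator] using hasDerivAt_bernoulliWeight ω p
  · simpa only [hω, if_false, signedIndicator, zero_mul, sum_const_zero]
      using hasDerivAt_const p (0 : ℝ)

lemma sum_signedIndicator_mul_bernoulliWeightOff {A : Set (S → Bool)} (hA : IncreasingEvent A)
    (p : ℝ) (s : S) :
    ∑ ω, signedIndicator A s ω * bernoulliWeightOff p s ω = bernoulliProb p (pivotal A s) := by
  refine sum_eq_sum_of_add_flipAt s fun ω => ?_
  rw [bernoulliWeightOff_flipAt, ← add_mul, signedIndicator_add_flipAt hA,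
    flipAt_mem_pivotal_iff, ← bernoulliWeight_add_flipAt p s]
  split_ifs <;> ring

lemma sum_bernoulliProb_eq_sum_bernoulliWeight_mul_card (p : ℝ) (B : S → Set (S → Bool)) :
    ∑ s, bernoulliProb p (B s) =
      ∑ ω, bernoulliWeight p ω * ((univ.filter fun s => ω ∈ B s).card : ℝ) := by
  simp only [bernoulliProb]
  rw [sum_comm]
  refine sum_congr rfl fun ω _ => ?_
  rw [← sum_filter, sum_const, nsmul_eq_mul, mul_comm]

end Russo

open Classical in
/-- Russo's formula: the derivative of `p ↦ P_p(A)` is the sum over sites of the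
probability of being pivotal, which equals the expected number of pivotal sites. -/
theorem russo_formula {S : Type*} [Fintype S] [DecidableEq S]
    (A : Set (S → Bool)) (hA : IncreasingEvent A) (p : ℝ) :
    HasDerivAt (fun q => bernoulliProb q A) (∑ s : S, bernoulliProb p (pivotal A s)) p ∧
    ∑ s : S, bernoulliProb p (pivotal A s) =
      ∑ ω : S → Bool, bernoulliWeight p ω *
        ((Finset.univ.filter fun s : S => ω ∈ pivotal A s).card : ℝ) := by
  refine ⟨?_, sum_bernoulliProb_eq_sum_bernoulliWeight_mul_card p (pivotal A)⟩
  simpa only [sum_signedIndicator_mul_bernoulliWeightOff hA] using hasDerivAt_bernoulliProb A p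
end
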